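/- Let w ∈ A_q for some q ∈ (1, ∞). For every 1 < p < ∞ and every finite collection 𝒫 of bitiles, the quantity sup over 2-overlapping trees T ⊂ 𝒫 of w(I_T)^{-1/p} ‖S_T f‖_{L^p(w)} is comparable, with constants depending only on p and w, to the quantity sup over 2-overlapping trees T ⊂ 𝒫 of w(I_T)^{-1} ‖S_T f‖_{L^{1,∞}(w)}. -/

import Mathlib

open MeasureTheory Real Set
open scoped ENNReal NNReal

noncomputable section

/-- The weighted measure `w(x) dx` on `ℝ`. -/
def wMeasure (w : ℝ → ℝ) : Measure ℝ :=
  volume.withDensity fun x => ENNReal.ofReal (w x)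

/-- The weighted measure of a set, `w(E) = ∫_E w`. -/
def wSet (w : ℝ → ℝ) (E : Set ℝ) : ℝ≥0∞ := wMeasure w E

/-- Weighted `L^p` (quasi-)norm of a function on a set `A` (with `p` a real exponent). -/
def wLpOn {E : Type*} [NormedAddCommGroup E] (w : ℝ → ℝ) (p : ℝ) (A : Set ℝ) (f : ℝ → E) :
    ℝ≥0∞ :=
  (∫⁻ x in A, (‖f x‖₊ : ℝ≥0∞) ^ p ∂(wMeasure w)) ^ (1 / p)

/-- Weighted `L^p` (quasi-)norm on all of `ℝ`. -/
def wLp {E : Type*} [NormedAddCommGroup E] (w : ℝ → ℝ) (p : ℝ) (f : ℝ → E) : ℝ≥0∞ :=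
  (∫⁻ x, (‖f x‖₊ : ℝ≥0∞) ^ p ∂(wMeasure w)) ^ (1 / p)

/-- A weight: a measurable, a.e. positive, locally integrable function. -/
structure IsWeight (w : ℝ → ℝ) : Prop where
  meas : Measurable w
  pos : ∀ᵐ x : ℝ, 0 < w x
  locInt : LocallyIntegrable w

/-- The Muckenhoupt `A_p` condition with constant `A` (with the usual interpretation
for `p = 1`). -/
def apBound (p : ℝ) (w : ℝ → ℝ) (A : ℝ) : Prop :=
  if p = 1 then
    ∀ a b : ℝ, a < b → ∀ᵐ x : ℝ, x ∈ Set.Ioo a b →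
      (b - a)⁻¹ * ∫ y in a..b, w y ≤ A * w x
  else
    ∀ a b : ℝ, a < b →
      ((b - a)⁻¹ * ∫ y in a..b, w y) *
        ((b - a)⁻¹ * ∫ y in a..b, w y ^ (-1 / (p - 1))) ^ (p - 1) ≤ A

/-- `w` is a Muckenhoupt `A_p` weight. -/
def IsAp (p : ℝ) (w : ℝ → ℝ) : Prop :=
  IsWeight w ∧ ∃ A : ℝ, 0 < A ∧ apBound p w A

/-- The `k`-th Fourier coefficient of a function on `[0,1]`. -/
def fourierCoeff01 (f : ℝ → ℂ) (k : ℤ) : ℂ :=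
  ∫ x in (0:ℝ)..1, f x * Complex.exp (-2 * (Real.pi : ℂ) * Complex.I * (k : ℂ) * (x : ℂ))

/-- The partial Fourier sum `S_n f(x) = ∑_{|k| < n} f̂(k) e^{2πikx}` (zero for `n ≤ 0`). -/
def partialFourierSum01 (f : ℝ → ℂ) (n : ℤ) (x : ℝ) : ℂ :=
  ∑ k ∈ Finset.Ioo (-n) n,
    fourierCoeff01 f k * Complex.exp (2 * (Real.pi : ℂ) * Complex.I * (k : ℂ) * (x : ℂ))

/-- The `r`-variational Carleson operator for Fourier series on `[0,1]`. -/
def varCarleson01 (r : ℝ) (f : ℝ → ℂ) (x : ℝ) : ℝ≥0∞ :=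
  ⨆ (M : ℕ) (N : ℕ → ℤ) (_ : StrictMono N),
    ENNReal.ofReal ((∑ j ∈ Finset.range M,
      ‖partialFourierSum01 f (N (j + 1)) x - partialFourierSum01 f (N j) x‖ ^ r) ^ (1 / r))

/-- The maximal partial Fourier sum operator (`r = ∞` variation). -/
def maxCarleson01 (f : ℝ → ℂ) (x : ℝ) : ℝ≥0∞ :=
  ⨆ n : ℤ, (‖partialFourierSum01 f n x‖₊ : ℝ≥0∞)

/-- The `r`-variational Carleson operator on the real line. -/
def varCarlesonR (r : ℝ) (f : ℝ → ℂ) (x : ℝ) : ℝ≥0∞ :=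
  ⨆ (K : ℕ) (N : ℕ → ℝ) (_ : StrictMono N),
    ENNReal.ofReal ((∑ j ∈ Finset.range K,
      ‖∫ ξ in (N j)..(N (j + 1)),
        FourierTransform.fourier f ξ * Complex.exp (2 * (Real.pi : ℂ) * Complex.I * (ξ : ℂ) * (x : ℂ))‖ ^ r) ^ (1 / r))
open Classical

/-! ### Tiles, bitiles, trees and the phase-plane machinery -/

/-- An interval, given by its endpoints. -/
structure Ivl where
  lo : ℝ
  hi : ℝ

namespace Ivl

/-- The length of an interval. -/
def len (I : Ivl) : ℝ := I.hi - I.lo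

/-- The center of an interval. -/
def mid (I : Ivl) : ℝ := (I.lo + I.hi) / 2

/-- The underlying set of an interval. -/
def toSet (I : Ivl) : Set ℝ := Set.Ico I.lo I.hi

/-- `cI`: the interval with the same center as `I` and length `c * |I|`. -/
def dilate (c : ℝ) (I : Ivl) : Ivl :=
  ⟨I.mid - c * I.len / 2, I.mid + c * I.len / 2⟩

/-- An interval is dyadic if it is of the form `[n 2^k, (n+1) 2^k)`. -/
def dyadic (I : Ivl) : Prop :=
  ∃ k n : ℤ, I.lo = (n : ℝ) * 2 ^ k ∧ I.hi = ((n : ℝ) + 1) * 2 ^ k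

end Ivl

/-- The window function `χ̃_I(x) = (1 + ((x - c(I))/|I|)²)^{-1/2}`. -/
def chiT (I : Ivl) (x : ℝ) : ℝ :=
  (1 + ((x - I.mid) / I.len) ^ 2) ^ (-(1/2) : ℝ)

/-- A tile: a dyadic rectangle `I × ω` of area `1`. -/
structure Tile where
  I : Ivl
  ω : Ivl
  dyI : I.dyadic
  dyω : ω.dyadic
  area : I.len * ω.len = 1

/-- The admissibility conditions on the fixed constants. -/
def Admissible (C1 C2 C21 C22 C3 : ℝ) : Prop :=
  1 ≤ C2 ∧ 0 < C3 ∧ C3 < C2 ∧ C2 ≤ C1 ∧ C2 ≤ C21 ∧ C2 ≤ C22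

/-- A bitile: two tiles `P₁, P₂` over a common spatial dyadic interval, with
`sup C₂ω_{P₁} ≤ inf C₂ω_{P₂}`, frequency interval `ω_P` equal to the convex hull of
`C_{2,1}ω_{P₁} ∪ C_{2,2}ω_{P₂}`, of length at most `C₁(|ω_{P₁}| + |ω_{P₂}|)`. -/
structure Bitile (C1 C2 C21 C22 : ℝ) where
  t1 : Tile
  t2 : Tile
  sameI : t1.I = t2.I
  sep : (Ivl.dilate C2 t1.ω).hi ≤ (Ivl.dilate C2 t2.ω).lo
  lenBound : (Ivl.dilate C22 t2.ω).hi - (Ivl.dilate C21 t1.ω).lo ≤ C1 * (t1.ω.len + t2.ω.len)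

namespace Bitile

variable {C1 C2 C21 C22 : ℝ}

/-- The spatial interval `I_P` of a bitile. -/
def I (P : Bitile C1 C2 C21 C22) : Ivl := P.t1.I

/-- The frequency interval `ω_P` (the convex hull of `C_{2,1}ω_{P₁} ∪ C_{2,2}ω_{P₂}`). -/
def ω (P : Bitile C1 C2 C21 C22) : Ivl :=
  ⟨(Ivl.dilate C21 P.t1.ω).lo, (Ivl.dilate C22 P.t2.ω).hi⟩

/-- The interval `ω̃_P`, the convex hull of `C₂ω_{P₁} ∪ C₂ω_{P₂}`. -/
def ωt (P : Bitile C1 C2 C21 C22) : Ivl :=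
  ⟨(Ivl.dilate C2 P.t1.ω).lo, (Ivl.dilate C2 P.t2.ω).hi⟩

/-- The phase-plane region `I_P × ω_P` of a bitile. -/
def carrier (P : Bitile C1 C2 C21 C22) : Set (ℝ × ℝ) :=
  P.I.toSet ×ˢ P.ω.toSet

end Bitile

/-- The separation conditions (S1)–(S3) for a finite bitile collection, with
separation constant `K0`. -/
def SepConds {C1 C2 C21 C22 : ℝ} (K0 : ℝ) (Ps : Finset (Bitile C1 C2 C21 C22)) : Prop :=
  (∃ ρ : ℝ, ∀ P ∈ Ps, (P.t2.ω.lo - P.t1.ω.hi) / P.t1.ω.len = ρ) ∧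
  (∀ P ∈ Ps, ∀ P' ∈ Ps, (P.ω.toSet ∩ P'.ω.toSet).Nonempty → P.I.len = P'.I.len →
    P.ω = P'.ω) ∧
  (∀ P ∈ Ps, ∀ P' ∈ Ps, P'.I.len < P.I.len → P.ω.len < P'.t1.ω.len / K0)

/-- A Fourier wave packet adapted to a tile `t`, with decay constants `Cp N n`. -/
def IsWavePacket (C3 : ℝ) (Cp : ℕ → ℕ → ℝ) (t : Tile) (φ : ℝ → ℂ) : Prop :=
  ContDiff ℝ (⊤ : ℕ∞) φ ∧
  (∀ ξ : ℝ, FourierTransform.fourier φ ξ ≠ 0 → ξ ∈ (Ivl.dilate C3 t.ω).toSet) ∧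
  ∀ (N n : ℕ) (x : ℝ),
    ‖iteratedDeriv n φ x‖ ≤
      Cp N n * t.I.len ^ (-(1/2 : ℝ) - n) * (1 + |x - t.I.mid| / t.I.len) ^ (-((N : ℝ) + n))

/-- The (complex) inner product `⟨f, g⟩ = ∫ f ḡ`. -/
def inn (f g : ℝ → ℂ) : ℂ := ∫ x, f x * (starRingEnd ℂ) (g x)

/-- The square function `S_Q f` of a bitile collection `Q`. -/
def SQfn {C1 C2 C21 C22 : ℝ} (φ : Bitile C1 C2 C21 C22 → ℝ → ℂ) (f : ℝ → ℂ)
    (Q : Finset (Bitile C1 C2 C21 C22)) (x : ℝ) : ℝ :=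
  (∑ P ∈ Q, ‖inn f (φ P)‖ ^ 2 / P.I.len * P.I.toSet.indicator (fun _ => (1:ℝ)) x) ^ ((1:ℝ)/2)

/-- A tree of bitiles, with top (dyadic) interval `top` and top frequency `ξ`. -/
structure PTree (C1 C2 C21 C22 : ℝ) where
  bitiles : Finset (Bitile C1 C2 C21 C22)
  top : Ivl
  ξ : ℝ
  dytop : top.dyadic
  compat : ∀ P ∈ bitiles, P.I.toSet ⊆ top.toSet ∧
    Set.Ico (ξ - 1 / (2 * top.len)) (ξ + 1 / (2 * top.len)) ⊆ P.ωt.toSet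

namespace PTree

variable {C1 C2 C21 C22 : ℝ}

/-- The top frequency interval `ω_T` of a tree. -/
def ωSet (T : PTree C1 C2 C21 C22) : Set ℝ :=
  Set.Ico (T.ξ - 1 / (2 * T.top.len)) (T.ξ + 1 / (2 * T.top.len))

/-- A tree is 2-overlapping if `ξ_T ∈ C₂ω_{P₂}` for every `P` in the tree. -/
def overlapping (T : PTree C1 C2 C21 C22) : Prop :=
  ∀ P ∈ T.bitiles, T.ξ ∈ (Ivl.dilate C2 P.t2.ω).toSet

/-- A tree is 2-lacunary if `ξ_T ∉ C₂ω_{P₂}` for every `P` in the tree. -/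
def lacunary (T : PTree C1 C2 C21 C22) : Prop :=
  ∀ P ∈ T.bitiles, T.ξ ∉ (Ivl.dilate C2 P.t2.ω).toSet

end PTree

/-- The union of the bitiles of a finite collection of trees. -/
def treesUnion {C1 C2 C21 C22 : ℝ} (Ts : Finset (PTree C1 C2 C21 C22)) :
    Finset (Bitile C1 C2 C21 C22) :=
  Ts.biUnion PTree.bitiles

/-- The bitiles of `Ps` not belonging to any tree of `Ts`. -/
def residualBitiles {C1 C2 C21 C22 : ℝ} (Ps : Finset (Bitile C1 C2 C21 C22))
    (Ts : Finset (PTree C1 C2 C21 C22)) : Finset (Bitile C1 C2 C21 C22) :=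
  Ps \ treesUnion Ts

/-- The (weighted) size of a bitile collection, relative to `f`. -/
def size {C1 C2 C21 C22 : ℝ} (w : ℝ → ℝ) (φ : Bitile C1 C2 C21 C22 → ℝ → ℂ)
    (f : ℝ → ℂ) (Ps : Finset (Bitile C1 C2 C21 C22)) : ℝ≥0∞ :=
  ⨆ (T : PTree C1 C2 C21 C22) (_ : T.bitiles ⊆ Ps) (_ : T.overlapping),
    (wSet w T.top.toSet) ^ (-(1/2) : ℝ) *
      (∫⁻ x, ENNReal.ofReal (SQfn φ f T.bitiles x) ^ (2:ℝ) ∂(wMeasure w)) ^ ((1:ℝ)/2)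

/-- The `L^p` variant of the size. -/
def sizeLp {C1 C2 C21 C22 : ℝ} (w : ℝ → ℝ) (φ : Bitile C1 C2 C21 C22 → ℝ → ℂ)
    (f : ℝ → ℂ) (p : ℝ) (Ps : Finset (Bitile C1 C2 C21 C22)) : ℝ≥0∞ :=
  ⨆ (T : PTree C1 C2 C21 C22) (_ : T.bitiles ⊆ Ps) (_ : T.overlapping),
    (wSet w T.top.toSet) ^ (-(1/p) : ℝ) *
      (∫⁻ x, ENNReal.ofReal (SQfn φ f T.bitiles x) ^ p ∂(wMeasure w)) ^ (1/p)

/-- The weak `L^{1,∞}` variant of the size. -/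
def sizeWk {C1 C2 C21 C22 : ℝ} (w : ℝ → ℝ) (φ : Bitile C1 C2 C21 C22 → ℝ → ℂ)
    (f : ℝ → ℂ) (Ps : Finset (Bitile C1 C2 C21 C22)) : ℝ≥0∞ :=
  ⨆ (T : PTree C1 C2 C21 C22) (_ : T.bitiles ⊆ Ps) (_ : T.overlapping),
    (wSet w T.top.toSet)⁻¹ *
      ⨆ t : ℝ≥0, (t : ℝ≥0∞) * wMeasure w {x | (t : ℝ) < SQfn φ f T.bitiles x}

/-- A well-separated collection of 2-overlapping trees. -/
def WellSeparated {C1 C2 C21 C22 : ℝ} (C3 : ℝ) (Ts : Finset (PTree C1 C2 C21 C22)) : Prop :=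
  (∀ T ∈ Ts, T.overlapping) ∧
  (∀ T ∈ Ts, ∀ T' ∈ Ts, T ≠ T' → ∀ P ∈ T.bitiles, ∀ P' ∈ T'.bitiles,
    P'.I.len < P.I.len →
      ((Ivl.dilate C3 P.t1.ω).toSet ∩ (Ivl.dilate C3 P'.t1.ω).toSet = ∅ ∨
        P'.I.toSet ∩ T.top.toSet = ∅)) ∧
  (∀ T ∈ Ts, ∀ T' ∈ Ts, ∀ P ∈ T.bitiles, ∀ P' ∈ T'.bitiles, P ≠ P' → P.I.len = P'.I.len →
    (P.I.toSet ×ˢ (Ivl.dilate C3 P.t1.ω).toSet) ∩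
      (P'.I.toSet ×ˢ (Ivl.dilate C3 P'.t1.ω).toSet) = ∅)

/-- The counting function `Σ_{T ∈ Ts} 1_{2^k I_T}`. -/
def treeCount {C1 C2 C21 C22 : ℝ} (Ts : Finset (PTree C1 C2 C21 C22)) (k : ℕ) (x : ℝ) : ℝ :=
  ∑ T ∈ Ts, (Ivl.dilate (2 ^ k) T.top).toSet.indicator (fun _ => (1:ℝ)) x

/-- The linearizing measurable data: functions `N_j`, `d_j` with
`N_0(x) < N_1(x) < ⋯`, finitely many `d_j(x)` nonzero, and `Σ_j |d_j(x)|^{r'} = 1`. -/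
structure VarData (r' : ℝ) where
  N : ℕ → ℝ → ℝ
  d : ℕ → ℝ → ℂ
  measN : ∀ j, Measurable (N j)
  measd : ∀ j, Measurable (d j)
  monoN : ∀ x : ℝ, StrictMono fun j => N j x
  d0 : ∀ x : ℝ, d 0 x = 0
  finSupp : ∀ x : ℝ, {j : ℕ | d j x ≠ 0}.Finite
  normOne : ∀ x : ℝ, ∑' j : ℕ, ‖d j x‖ ^ r' = 1

/-- The linearizing coefficient `d_P(x)`: equals `d_j(x)` for the (unique) `j ≥ 1`
with `N_{j-1}(x) ∉ ω_P` and `N_j(x) ∈ ω_{P₂}`, and `0` if there is no such `j`. -/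
def VarData.dP {r' : ℝ} {C1 C2 C21 C22 : ℝ} (𝒟 : VarData r')
    (P : Bitile C1 C2 C21 C22) (x : ℝ) : ℂ :=
  if h : ∃ j : ℕ, 0 < j ∧ 𝒟.N (j - 1) x ∉ P.ω.toSet ∧ 𝒟.N j x ∈ P.t2.ω.toSet
  then 𝒟.d h.choose x else 0

/-- The (weighted) density of a bitile collection. -/
def density {C1 C2 C21 C22 : ℝ} (w : ℝ → ℝ) (r' D : ℝ) (g : ℝ → ℂ) (𝒟 : VarData r')
    (Ps : Finset (Bitile C1 C2 C21 C22)) : ℝ≥0∞ :=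
  ⨆ (T : PTree C1 C2 C21 C22) (_ : T.bitiles ⊆ Ps) (_ : T.bitiles.Nonempty),
    ((wSet w T.top.toSet)⁻¹ *
      ∫⁻ x, ENNReal.ofReal (chiT T.top x ^ D * ‖g x‖ ^ r' *
        (∑' j : ℕ, if 𝒟.N j x ∈ T.ωSet then ‖𝒟.d j x‖ ^ r' else 0) * w x)) ^ (1/r')

/-- The improved (weighted) density of a bitile collection. -/
def idensity {C1 C2 C21 C22 : ℝ} (w : ℝ → ℝ) (r' D : ℝ) (g : ℝ → ℂ) (𝒟 : VarData r')
    (Ps : Finset (Bitile C1 C2 C21 C22)) : ℝ≥0∞ :=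
  ⨆ (P : Bitile C1 C2 C21 C22) (_ : P ∈ Ps),
    ((wSet w P.I.toSet)⁻¹ *
      ∫⁻ x, ENNReal.ofReal (chiT P.I x ^ D * ‖g x‖ ^ r' *
        (∑' j : ℕ, if 𝒟.N j x ∈ P.t2.ω.toSet then ‖𝒟.d j x‖ ^ r' else 0) * w x)) ^ (1/r')

/-- The linearized model Carleson operator `C_Ps f`. -/
def Cmodel {r' : ℝ} {C1 C2 C21 C22 : ℝ} (φ : Bitile C1 C2 C21 C22 → ℝ → ℂ)
    (𝒟 : VarData r') (Ps : Finset (Bitile C1 C2 C21 C22)) (f : ℝ → ℂ) (x : ℝ) : ℂ :=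
  ∑ P ∈ Ps, inn f (φ P) * φ P x * 𝒟.dP P x

/-- The bilinear form `B_Ps(f,g) = Σ_P ⟨f, φ_{P₁}⟩ ⟨φ_{P₁} d_P, g w⟩`. -/
def Bform {r' : ℝ} {C1 C2 C21 C22 : ℝ} (w : ℝ → ℝ) (φ : Bitile C1 C2 C21 C22 → ℝ → ℂ)
    (𝒟 : VarData r') (Ps : Finset (Bitile C1 C2 C21 C22)) (f g : ℝ → ℂ) : ℂ :=
  ∑ P ∈ Ps, inn f (φ P) *
    ∫ x, φ P x * 𝒟.dP P x * (starRingEnd ℂ) (g x) * (w x : ℂ)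

/-- The variation-norm model operator `C_{r,Ps} f`. -/
def CrOp {C1 C2 C21 C22 : ℝ} (r : ℝ) (φ : Bitile C1 C2 C21 C22 → ℝ → ℂ)
    (Ps : Finset (Bitile C1 C2 C21 C22)) (f : ℝ → ℂ) (x : ℝ) : ℝ≥0∞ :=
  ⨆ (K : ℕ) (N : ℕ → ℝ) (_ : StrictMono N),
    ENNReal.ofReal ((∑ j ∈ Finset.range K,
      ‖∑ P ∈ Ps, inn f (φ P) * φ P x *
        (if N j ∉ P.ω.toSet ∧ N (j + 1) ∈ P.t2.ω.toSet then 1 else 0)‖ ^ r) ^ (1/r))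

/-- The `L^t` Hardy–Littlewood maximal function. -/
def Mt {E : Type*} [NormedAddCommGroup E] (t : ℝ) (f : ℝ → E) (x : ℝ) : ℝ≥0∞ :=
  ⨆ (a : ℝ) (b : ℝ) (_ : a ≤ x) (_ : x ≤ b) (_ : a < b),
    ((ENNReal.ofReal (b - a))⁻¹ * ∫⁻ y in Set.Icc a b, (‖f y‖₊ : ℝ≥0∞) ^ t) ^ (1/t)

/-- The dyadic interval `[n 2^k, (n+1) 2^k)`. -/
def dyadicIco (k n : ℤ) : Set ℝ := Set.Ico ((n : ℝ) * 2 ^ k) (((n : ℝ) + 1) * 2 ^ k)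

/-- The mean oscillation of `f` over the dyadic interval `[n 2^k, (n+1) 2^k)`. -/
def oscDy (f : ℝ → ℝ) (k n : ℤ) : ℝ :=
  ((2:ℝ) ^ k)⁻¹ * ∫ y in dyadicIco k n, |f y - ((2:ℝ) ^ k)⁻¹ * ∫ z in dyadicIco k n, f z|

/-- The dyadic sharp maximal function. -/
def sharpD (f : ℝ → ℝ) (x : ℝ) : ℝ≥0∞ :=
  ⨆ (k : ℤ) (n : ℤ) (_ : x ∈ dyadicIco k n), ENNReal.ofReal (oscDy f k n)

/-- The dyadic BMO norm. -/
def bmoD (f : ℝ → ℝ) : ℝ≥0∞ :=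
  ⨆ (k : ℤ) (n : ℤ), ENNReal.ofReal (oscDy f k n)

/-- The (unweighted) `L²` norm. -/
def l2Norm (f : ℝ → ℂ) : ℝ≥0∞ :=
  (∫⁻ x, (‖f x‖₊ : ℝ≥0∞) ^ (2:ℝ)) ^ ((1:ℝ)/2)

/-!
Write `S_T² = ∑_P a_P 1_{I_P}`; the dyadic intervals `I_P` form a laminar family. For `c ≥ 0` stop
at the maximal `I_P` whose total weight from the intervals containing it exceeds `c`: these are
disjoint, cover `{S_T² > c}`, and on each of them `S_T² ≤ c + S²` of the bitiles below it. Those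
bitiles form two overlapping trees with that top, so the weak size gives the good-λ inequality
`t · w{S_T² > c + 2t²} ≤ 2 size_{1,∞} · w{S_T² > c}`. Iterating it with `t = 2^{n+2} size_{1,∞}`,
`n ≥ p/2`, makes the distribution of `S_T²` decay geometrically, which yields the `L^p` bound.
The converse is Chebyshev's inequality, as `S_T` is supported in `I_T`.
-/

lemma mem_dyadicIco_iff {k n : ℤ} {x : ℝ} : x ∈ dyadicIco k n ↔ ⌊x / 2 ^ k⌋ = n := by
  have h2k : (0 : ℝ) < 2 ^ k := zpow_pos two_pos k
  rw [Int.floor_eq_iff, le_div_iff₀ h2k, div_lt_iff₀ h2k]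
  rfl

lemma floor_div_two_zpow_add (k : ℤ) (d : ℕ) (x : ℝ) :
    ⌊x / 2 ^ (k + d)⌋ = ⌊x / 2 ^ k⌋ / 2 ^ d := by
  rw [zpow_add₀ two_ne_zero, zpow_natCast, ← div_div,
    show (2 : ℝ) ^ d = ((2 ^ d : ℕ) : ℝ) by push_cast; rfl, Int.floor_div_natCast]
  push_cast
  rfl

lemma dyadicIco_subset_of_le {k l n m : ℤ} (hkl : k ≤ l) {x : ℝ} (hxn : x ∈ dyadicIco k n)
    (hxm : x ∈ dyadicIco l m) : dyadicIco k n ⊆ dyadicIco l m := by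
  obtain ⟨d, rfl⟩ : ∃ d : ℕ, l = k + d := ⟨(l - k).toNat, by omega⟩
  intro y hy
  rw [mem_dyadicIco_iff] at hxn hxm hy ⊢
  rw [floor_div_two_zpow_add] at hxm ⊢
  rw [hy, ← hxm, hxn]

namespace Ivl

lemma dyadic.len_pos {I : Ivl} (h : I.dyadic) : 0 < I.len := by
  obtain ⟨k, n, hlo, hhi⟩ := h
  have h2k : (0 : ℝ) < 2 ^ k := zpow_pos two_pos k
  simp only [len, hlo, hhi]
  linarith

lemma dyadic.lo_lt_hi {I : Ivl} (h : I.dyadic) : I.lo < I.hi :=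
  sub_pos.mp h.len_pos

lemma dyadic.exists_toSet_eq {I : Ivl} (h : I.dyadic) : ∃ k n : ℤ, I.toSet = dyadicIco k n := by
  obtain ⟨k, n, hlo, hhi⟩ := h
  exact ⟨k, n, by rw [toSet, hlo, hhi, dyadicIco]⟩

lemma dyadic.subset_or_subset {I J : Ivl} (hI : I.dyadic) (hJ : J.dyadic) {x : ℝ}
    (hxI : x ∈ I.toSet) (hxJ : x ∈ J.toSet) : I.toSet ⊆ J.toSet ∨ J.toSet ⊆ I.toSet := by
  obtain ⟨k, n, hI⟩ := hI.exists_toSet_eq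
  obtain ⟨l, m, hJ⟩ := hJ.exists_toSet_eq
  rw [hI] at hxI ⊢
  rw [hJ] at hxJ ⊢
  rcases le_total k l with hkl | hlk
  · exact .inl (dyadicIco_subset_of_le hkl hxI hxJ)
  · exact .inr (dyadicIco_subset_of_le hlk hxJ hxI)

lemma len_le_of_toSet_subset {I J : Ivl} (hI : I.lo < I.hi) (h : I.toSet ⊆ J.toSet) :
    I.len ≤ J.len := by
  obtain ⟨hlo, hhi⟩ := (Set.Ico_subset_Ico_iff hI).mp h
  simp only [len]
  linarith

lemma dilate_hi (c : ℝ) (I : Ivl) : (dilate c I).hi = (dilate c I).lo + c * I.len := by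
  simp only [dilate]
  ring

end Ivl

namespace IsWeight

variable {w : ℝ → ℝ}

lemma wMeasure_Ico_ne_top (hw : IsWeight w) (a b : ℝ) : wMeasure w (Ico a b) ≠ ⊤ := by
  have hfin :=
    (hw.locInt.integrableOn_isCompact (isCompact_Icc (a := a) (b := b))).setLIntegral_lt_top
  rw [wMeasure, withDensity_apply _ measurableSet_Ico]
  exact ne_top_of_le_ne_top hfin.ne (lintegral_mono_set Ico_subset_Icc_self)

lemma wMeasure_Ico_ne_zero (hw : IsWeight w) {a b : ℝ} (hab : a < b) :
    wMeasure w (Ico a b) ≠ 0 := by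
  rw [wMeasure, Ne, withDensity_apply_eq_zero' hw.meas.ennreal_ofReal.aemeasurable]
  intro h
  have hnull : volume {x | ENNReal.ofReal (w x) = 0} = 0 := by
    refine measure_mono_null (fun x (hx : ENNReal.ofReal (w x) = 0) => ?_) (ae_iff.mp hw.pos)
    exact (ENNReal.ofReal_eq_zero.mp hx).not_gt
  have hIco : volume (Ico a b) = 0 := by
    refine measure_mono_null (fun x hx => ?_) (measure_union_null h hnull)
    by_cases hx0 : ENNReal.ofReal (w x) = 0
    · exact .inr hx0
    · exact .inl ⟨hx0, hx⟩
  rw [Real.volume_Ico, ENNReal.ofReal_eq_zero] at hIco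
  linarith

lemma wSet_dyadic_ne_zero (hw : IsWeight w) {I : Ivl} (hI : I.dyadic) : wSet w I.toSet ≠ 0 :=
  hw.wMeasure_Ico_ne_zero hI.lo_lt_hi

lemma wSet_ne_top (hw : IsWeight w) (I : Ivl) : wSet w I.toSet ≠ ⊤ :=
  hw.wMeasure_Ico_ne_top _ _

end IsWeight

section Laminar

variable {α ι : Type*}

def indicatorSum (s : Finset ι) (S : ι → Set α) (a : ι → ℝ) (x : α) : ℝ :=
  ∑ i ∈ s, a i * (S i).indicator (fun _ => (1 : ℝ)) x

def IsLaminar (s : Finset ι) (S : ι → Set α) : Prop :=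
  ∀ i ∈ s, ∀ j ∈ s, (S i ∩ S j).Nonempty → S i ⊆ S j ∨ S j ⊆ S i

def weightAbove (s : Finset ι) (S : ι → Set α) (a : ι → ℝ) (A : Set α) : ℝ :=
  ∑ i ∈ s with A ⊆ S i, a i

def weightStrictlyAbove (s : Finset ι) (S : ι → Set α) (a : ι → ℝ) (A : Set α) : ℝ :=
  ∑ i ∈ s with A ⊂ S i, a i

/-- The maximal members `A` of the family with `c < weightAbove s S a A`, maximality being
expressed as `weightStrictlyAbove s S a A ≤ c`. -/
def stoppingSets (s : Finset ι) (S : ι → Set α) (a : ι → ℝ) (c : ℝ) : Finset (Set α) :=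
  (s.image S).filter fun A => weightStrictlyAbove s S a A ≤ c ∧ c < weightAbove s S a A

variable {s : Finset ι} {S : ι → Set α} {a : ι → ℝ}

lemma indicatorSum_eq_sum_filter (x : α) :
    indicatorSum s S a x = ∑ i ∈ s with x ∈ S i, a i := by
  rw [Finset.sum_filter]
  refine Finset.sum_congr rfl fun i _ => ?_
  by_cases hx : x ∈ S i <;> simp [hx]

lemma indicatorSum_nonneg (ha : ∀ i ∈ s, 0 ≤ a i) (x : α) : 0 ≤ indicatorSum s S a x := by
  rw [indicatorSum_eq_sum_filter]
  exact Finset.sum_nonneg fun i hi => ha i (Finset.mem_filter.mp hi).1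

lemma mem_of_indicatorSum_ne_zero {x : α} (hx : indicatorSum s S a x ≠ 0) :
    ∃ i ∈ s, x ∈ S i := by
  rw [indicatorSum_eq_sum_filter] at hx
  obtain ⟨i, hi, -⟩ := Finset.exists_ne_zero_of_sum_ne_zero hx
  exact ⟨i, (Finset.mem_filter.mp hi).1, (Finset.mem_filter.mp hi).2⟩

lemma measurable_indicatorSum [MeasurableSpace α] (hS : ∀ i, MeasurableSet (S i)) :
    Measurable (indicatorSum s S a) :=
  Finset.measurable_sum _ fun i _ => (measurable_const.indicator (hS i)).const_mul _

lemma sum_le_weightAbove (ha : ∀ i ∈ s, 0 ≤ a i) {t : Finset ι} (hts : t ⊆ s) {A : Set α}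
    (hA : ∀ i ∈ t, A ⊆ S i) : ∑ i ∈ t, a i ≤ weightAbove s S a A :=
  Finset.sum_le_sum_of_subset_of_nonneg
    (fun i hi => Finset.mem_filter.mpr ⟨hts hi, hA i hi⟩)
    fun i hi _ => ha i (Finset.mem_filter.mp hi).1

lemma weightAbove_le_weightStrictlyAbove (ha : ∀ i ∈ s, 0 ≤ a i) {A B : Set α} (hAB : A ⊂ B) :
    weightAbove s S a B ≤ weightStrictlyAbove s S a A :=
  Finset.sum_le_sum_of_subset_of_nonneg
    (Finset.monotone_filter_right _ fun _ _ hB => hAB.trans_subset hB)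
    fun i hi _ => ha i (Finset.mem_filter.mp hi).1

lemma weightAbove_le_indicatorSum (ha : ∀ i ∈ s, 0 ≤ a i) {A : Set α} {x : α} (hx : x ∈ A) :
    weightAbove s S a A ≤ indicatorSum s S a x := by
  rw [indicatorSum_eq_sum_filter]
  exact Finset.sum_le_sum_of_subset_of_nonneg
    (Finset.monotone_filter_right _ fun _ _ hA => hA hx)
    fun i hi _ => ha i (Finset.mem_filter.mp hi).1

/-- Inside `S j` the members not below `S j` are exactly those strictly above it. -/
lemma indicatorSum_eq_add_of_mem (hlam : IsLaminar s S) {j : ι} (hj : j ∈ s) {x : α}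
    (hx : x ∈ S j) :
    indicatorSum s S a x =
      indicatorSum (s.filter fun i => S i ⊆ S j) S a x + weightStrictlyAbove s S a (S j) := by
  rw [indicatorSum_eq_sum_filter, indicatorSum_eq_sum_filter, Finset.filter_filter,
    ← Finset.sum_filter_add_sum_filter_not _ (fun i => S i ⊆ S j), Finset.filter_filter,
    Finset.filter_filter, weightStrictlyAbove]
  congr 1
  · exact Finset.sum_congr (Finset.filter_congr fun _ _ => and_comm) fun _ _ => rfl
  · refine Finset.sum_congr (Finset.filter_congr fun i hi => ⟨fun ⟨hxi, hij⟩ => ?_,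
      fun ⟨hji, hij⟩ => ⟨hji hx, hij⟩⟩) fun _ _ => rfl
    rcases hlam i hi j hj ⟨x, hxi, hx⟩ with h | h
    · exact absurd h hij
    · exact ⟨h, hij⟩

lemma IsLaminar.exists_subset_forall (hlam : IsLaminar s S) {t : Finset ι} (hts : t ⊆ s)
    (ht : t.Nonempty) {x : α} (hx : ∀ i ∈ t, x ∈ S i) : ∃ m ∈ t, ∀ i ∈ t, S m ⊆ S i := by
  obtain ⟨A, hA⟩ := Finset.exists_minimal (ht.image S)
  obtain ⟨m, hm, hmA⟩ := Finset.mem_image.mp hA.prop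
  refine ⟨m, hm, fun i hi => ?_⟩
  rcases hlam m (hts hm) i (hts hi) ⟨x, hx m hm, hx i hi⟩ with h | h
  · exact h
  · rw [hmA] at h ⊢
    exact (hA.eq_of_subset (Finset.mem_image_of_mem S hi) h).symm.subset

lemma exists_eq_of_mem_stoppingSets {c : ℝ} {A : Set α} (hA : A ∈ stoppingSets s S a c) :
    ∃ j ∈ s, S j = A :=
  Finset.mem_image.mp (Finset.mem_filter.mp hA).1

lemma IsLaminar.pairwiseDisjoint_stoppingSets (hlam : IsLaminar s S) (ha : ∀ i ∈ s, 0 ≤ a i)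
    (c : ℝ) : (stoppingSets s S a c : Set (Set α)).PairwiseDisjoint id := by
  intro A hA B hB hAB
  obtain ⟨j, hj, rfl⟩ := exists_eq_of_mem_stoppingSets hA
  obtain ⟨k, hk, rfl⟩ := exists_eq_of_mem_stoppingSets hB
  obtain ⟨hj_le, hj_lt⟩ := (Finset.mem_filter.mp hA).2
  obtain ⟨hk_le, hk_lt⟩ := (Finset.mem_filter.mp hB).2
  refine Set.disjoint_left.mpr fun x hxj hxk => ?_
  rcases hlam j hj k hk ⟨x, hxj, hxk⟩ with h | h
  · linarith [weightAbove_le_weightStrictlyAbove (S := S) ha (h.ssubset_of_ne hAB)]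
  · linarith [weightAbove_le_weightStrictlyAbove (S := S) ha (h.ssubset_of_ne (Ne.symm hAB))]

/-- Take the largest member `S j ∋ x` with `c < weightAbove`; if `c < weightStrictlyAbove (S j)`,
the smallest member strictly above `S j` would be a larger one. -/
lemma IsLaminar.exists_mem_stoppingSets (hlam : IsLaminar s S) (ha : ∀ i ∈ s, 0 ≤ a i) {c : ℝ}
    (hc : 0 ≤ c) {x : α} (hx : c < indicatorSum s S a x) :
    ∃ A ∈ stoppingSets s S a c, x ∈ A := by
  rw [indicatorSum_eq_sum_filter] at hx
  obtain ⟨m, hm, hm_min⟩ := hlam.exists_subset_forall (t := s.filter fun i => x ∈ S i)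
    (Finset.filter_subset _ _) (Finset.nonempty_of_sum_ne_zero (hc.trans_lt hx).ne')
    fun i hi => (Finset.mem_filter.mp hi).2
  have hm_heavy : c < weightAbove s S a (S m) :=
    hx.trans_le (sum_le_weightAbove ha (Finset.filter_subset _ _) hm_min)
  set 𝒰 := (s.filter fun i => x ∈ S i ∧ c < weightAbove s S a (S i)).image S
  obtain ⟨A, hA⟩ := Finset.exists_maximal (s := 𝒰) ⟨S m, Finset.mem_image_of_mem S
    (Finset.mem_filter.mpr ⟨(Finset.mem_filter.mp hm).1, (Finset.mem_filter.mp hm).2, hm_heavy⟩)⟩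
  obtain ⟨j, hj, rfl⟩ := Finset.mem_image.mp hA.prop
  obtain ⟨hjs, hxj, hj_heavy⟩ := Finset.mem_filter.mp hj
  refine ⟨S j, Finset.mem_filter.mpr ⟨Finset.mem_image_of_mem S hjs, ?_, hj_heavy⟩, hxj⟩
  by_contra! hlt
  obtain ⟨k, hk, hk_min⟩ := hlam.exists_subset_forall (t := s.filter fun i => S j ⊂ S i)
    (Finset.filter_subset _ _) (Finset.nonempty_of_sum_ne_zero (hc.trans_lt hlt).ne')
    fun i hi => (Finset.mem_filter.mp hi).2.subset hxj
  obtain ⟨hks, hjk⟩ := Finset.mem_filter.mp hk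
  have hk_heavy : c < weightAbove s S a (S k) :=
    hlt.trans_le (sum_le_weightAbove ha (Finset.filter_subset _ _) hk_min)
  exact hA.not_ssuperset (Finset.mem_image_of_mem S
    (Finset.mem_filter.mpr ⟨hks, hjk.subset hxj, hk_heavy⟩)) hjk

lemma IsLaminar.biUnion_stoppingSets (hlam : IsLaminar s S) (ha : ∀ i ∈ s, 0 ≤ a i) {c : ℝ}
    (hc : 0 ≤ c) : ⋃ A ∈ stoppingSets s S a c, A = {x | c < indicatorSum s S a x} := by
  refine subset_antisymm (Set.iUnion₂_subset fun A hA x hx => ?_) fun x hx => ?_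
  · exact (Finset.mem_filter.mp hA).2.2.trans_le (weightAbove_le_indicatorSum ha hx)
  · obtain ⟨A, hA, hxA⟩ := hlam.exists_mem_stoppingSets ha hc hx
    exact Set.mem_biUnion hA hxA

lemma IsLaminar.indicatorSum_le_of_mem_stoppingSets (hlam : IsLaminar s S) {c : ℝ} {A : Set α}
    (hA : A ∈ stoppingSets s S a c) {x : α} (hx : x ∈ A) :
    indicatorSum s S a x ≤ c + indicatorSum (s.filter fun i => S i ⊆ A) S a x := by
  obtain ⟨j, hj, rfl⟩ := exists_eq_of_mem_stoppingSets hA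
  rw [indicatorSum_eq_add_of_mem hlam hj hx]
  linarith [(Finset.mem_filter.mp hA).2.1]

end Laminar

namespace Bitile

variable {C1 C2 C21 C22 : ℝ} (P : Bitile C1 C2 C21 C22)

lemma dyadic_I : P.I.dyadic := P.t1.dyI

lemma t1_ω_len : P.t1.ω.len = 1 / P.I.len := by
  rw [eq_div_iff P.dyadic_I.len_pos.ne', mul_comm, I, P.t1.area]

lemma t2_ω_len : P.t2.ω.len = 1 / P.I.len := by
  rw [eq_div_iff P.dyadic_I.len_pos.ne', mul_comm, I, P.sameI, P.t2.area]

lemma ωt_lo_add_le : P.ωt.lo + C2 * P.t2.ω.len ≤ (Ivl.dilate C2 P.t2.ω).lo := by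
  have := P.sep
  rw [Ivl.dilate_hi, t1_ω_len, ← t2_ω_len] at this
  exact this

lemma Ico_subset_ωt (hC2 : 1 ≤ C2) {η δ : ℝ} (hδ : 2 * δ ≤ P.t2.ω.len)
    (hlo : (Ivl.dilate C2 P.t2.ω).lo ≤ η + δ) (hhi : η + δ ≤ (Ivl.dilate C2 P.t2.ω).hi) :
    Ico (η - δ) (η + δ) ⊆ P.ωt.toSet := by
  have hℓ : 0 ≤ P.t2.ω.len := by rw [t2_ω_len]; exact one_div_nonneg.mpr P.dyadic_I.len_pos.le
  have := P.ωt_lo_add_le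
  refine Ico_subset_Ico ?_ hhi
  nlinarith

end Bitile

section SquareFunction

variable {C1 C2 C21 C22 : ℝ}

def sqSum (φ : Bitile C1 C2 C21 C22 → ℝ → ℂ) (f : ℝ → ℂ) (Q : Finset (Bitile C1 C2 C21 C22)) :
    ℝ → ℝ :=
  indicatorSum Q (fun P => P.I.toSet) fun P => ‖inn f (φ P)‖ ^ 2 / P.I.len

variable (φ : Bitile C1 C2 C21 C22 → ℝ → ℂ) (f : ℝ → ℂ) (Q : Finset (Bitile C1 C2 C21 C22))

lemma SQfn_eq_sqrt (x : ℝ) : SQfn φ f Q x = √(sqSum φ f Q x) := by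
  rw [Real.sqrt_eq_rpow]
  rfl

lemma isLaminar_bitile_I : IsLaminar Q fun P : Bitile C1 C2 C21 C22 => P.I.toSet :=
  fun P _ P' _ ⟨_, hx, hx'⟩ => P.dyadic_I.subset_or_subset P'.dyadic_I hx hx'

lemma sqSum_coeff_nonneg : ∀ P ∈ Q, 0 ≤ ‖inn f (φ P)‖ ^ 2 / P.I.len :=
  fun P _ => div_nonneg (sq_nonneg _) P.dyadic_I.len_pos.le

lemma sqSum_nonneg (x : ℝ) : 0 ≤ sqSum φ f Q x :=
  indicatorSum_nonneg (sqSum_coeff_nonneg φ f Q) x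

lemma measurable_sqSum : Measurable (sqSum φ f Q) :=
  measurable_indicatorSum fun _ => measurableSet_Ico

lemma measurable_SQfn : Measurable (SQfn φ f Q) :=
  (measurable_sqSum φ f Q).pow_const _

lemma setOf_lt_SQfn {t : ℝ} (ht : 0 ≤ t) :
    {x | t < SQfn φ f Q x} = {x | t ^ 2 < sqSum φ f Q x} :=
  Set.ext fun x => show t < SQfn φ f Q x ↔ t ^ 2 < sqSum φ f Q x by
    rw [SQfn_eq_sqrt]; exact Real.lt_sqrt ht

lemma sqSum_union {Q₁ Q₂ : Finset (Bitile C1 C2 C21 C22)} (h : Disjoint Q₁ Q₂) (x : ℝ) :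
    sqSum φ f (Q₁ ∪ Q₂) x = sqSum φ f Q₁ x + sqSum φ f Q₂ x :=
  Finset.sum_union h

end SquareFunction

namespace PTree

variable {C1 C2 C21 C22 : ℝ} (T : PTree C1 C2 C21 C22)

lemma ξ_add_le_hi {P : Bitile C1 C2 C21 C22} (hP : P ∈ T.bitiles) :
    T.ξ + 1 / (2 * T.top.len) ≤ (Ivl.dilate C2 P.t2.ω).hi := by
  have hδ : 0 < 1 / (2 * T.top.len) := by have := T.dytop.len_pos; positivity
  exact ((Ico_subset_Ico_iff (by linarith)).mp (T.compat P hP).2).2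

/-- The bitiles with `C₂ω_{P₂}` starting left of `ξ' = ξ_T - 1/(2|J|) + 1/(2|I_T|)` admit the
top frequency `ξ'`, the others keep `ξ_T`. -/
lemma exists_split_below (hC2 : 1 ≤ C2) (hT : T.overlapping) {J : Ivl} (hJ : J.dyadic) :
    ∃ T₁ T₂ : PTree C1 C2 C21 C22, T₁.top = J ∧ T₂.top = J ∧ T₁.overlapping ∧ T₂.overlapping ∧
      Disjoint T₁.bitiles T₂.bitiles ∧
      T₁.bitiles ∪ T₂.bitiles = T.bitiles.filter fun P => P.I.toSet ⊆ J.toSet := by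
  set δ := 1 / (2 * J.len)
  set ξ' := T.ξ - δ + 1 / (2 * T.top.len) with hξ'
  have hδ : 0 < δ := by have := hJ.len_pos; positivity
  have hδT : 0 < 1 / (2 * T.top.len) := by have := T.dytop.len_pos; positivity
  set D := T.bitiles.filter fun P => P.I.toSet ⊆ J.toSet
  have hD : ∀ P ∈ D, P ∈ T.bitiles ∧ P.I.toSet ⊆ J.toSet ∧ 2 * δ ≤ P.t2.ω.len := by
    intro P hP
    obtain ⟨hPT, hPJ⟩ := Finset.mem_filter.mp hP
    refine ⟨hPT, hPJ, ?_⟩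
    rw [P.t2_ω_len, show 2 * δ = 1 / J.len by simp only [δ]; field_simp]
    exact one_div_le_one_div_of_le P.dyadic_I.len_pos
      (Ivl.len_le_of_toSet_subset P.dyadic_I.lo_lt_hi hPJ)
  let T₁ : PTree C1 C2 C21 C22 :=
    { bitiles := D.filter fun P => (Ivl.dilate C2 P.t2.ω).lo ≤ ξ'
      top := J, ξ := ξ', dytop := hJ
      compat := fun P hP => by
        obtain ⟨hPD, hlo⟩ := Finset.mem_filter.mp hP
        obtain ⟨hPT, hPJ, hPδ⟩ := hD P hPD
        have := T.ξ_add_le_hi hPT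
        exact ⟨hPJ, P.Ico_subset_ωt hC2 hPδ (by linarith) (by linarith)⟩ }
  let T₂ : PTree C1 C2 C21 C22 :=
    { bitiles := D.filter fun P => ¬(Ivl.dilate C2 P.t2.ω).lo ≤ ξ'
      top := J, ξ := T.ξ, dytop := hJ
      compat := fun P hP => by
        obtain ⟨hPD, hlo⟩ := Finset.mem_filter.mp hP
        obtain ⟨hPT, hPJ, hPδ⟩ := hD P hPD
        obtain ⟨hξlo, -⟩ := hT P hPT
        have := Ivl.dilate_hi C2 P.t2.ω
        have : P.t2.ω.len ≤ C2 * P.t2.ω.len := le_mul_of_one_le_left (by linarith) hC2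
        exact ⟨hPJ, P.Ico_subset_ωt hC2 hPδ (by linarith) (by linarith)⟩ }
  refine ⟨T₁, T₂, rfl, rfl, fun P hP => ?_, fun P hP => hT P (hD P (Finset.mem_filter.mp hP).1).1,
    Finset.disjoint_filter_filter_not _ _ _, Finset.filter_union_filter_not_eq _ _⟩
  obtain ⟨hPD, hlo⟩ := Finset.mem_filter.mp hP
  have := T.ξ_add_le_hi (hD P hPD).1
  exact ⟨hlo, by linarith⟩

lemma setOf_sqSum_pos_subset (φ : Bitile C1 C2 C21 C22 → ℝ → ℂ) (f : ℝ → ℂ) :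
    {x | 0 < sqSum φ f T.bitiles x} ⊆ T.top.toSet := fun _ hx => by
  obtain ⟨P, hP, hxP⟩ := mem_of_indicatorSum_ne_zero (ne_of_gt hx)
  exact (T.compat P hP).1 hxP

end PTree

section GoodLambda

variable {C1 C2 C21 C22 : ℝ} {w : ℝ → ℝ} {φ : Bitile C1 C2 C21 C22 → ℝ → ℂ} {f : ℝ → ℂ}
  {Ps : Finset (Bitile C1 C2 C21 C22)}

lemma mul_wMeasure_le_sizeWk_mul (hw : IsWeight w) {T : PTree C1 C2 C21 C22}
    (hTP : T.bitiles ⊆ Ps) (hT : T.overlapping) (t : ℝ≥0) :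
    t * wMeasure w {x | (t : ℝ) ^ 2 < sqSum φ f T.bitiles x} ≤
      sizeWk w φ f Ps * wSet w T.top.toSet := by
  rw [mul_comm _ (wSet w _), ← ENNReal.inv_mul_le_iff (hw.wSet_dyadic_ne_zero T.dytop)
    (hw.wSet_ne_top _), ← setOf_lt_SQfn φ f _ t.coe_nonneg]
  exact le_iSup_of_le T <| le_iSup_of_le hTP <| le_iSup_of_le hT <|
    mul_le_mul_right (le_iSup (fun t : ℝ≥0 => (t : ℝ≥0∞) *
      wMeasure w {x | (t : ℝ) < SQfn φ f T.bitiles x}) t) _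

lemma mul_wMeasure_below_le (hC2 : 1 ≤ C2) (hw : IsWeight w) {T : PTree C1 C2 C21 C22}
    (hTP : T.bitiles ⊆ Ps) (hT : T.overlapping) {J : Ivl} (hJ : J.dyadic) (t : ℝ≥0) :
    t * wMeasure w {x | 2 * (t : ℝ) ^ 2 <
        sqSum φ f (T.bitiles.filter fun P => P.I.toSet ⊆ J.toSet) x} ≤
      2 * sizeWk w φ f Ps * wSet w J.toSet := by
  obtain ⟨T₁, T₂, rfl, hJ₂, hT₁, hT₂, hdisj, hunion⟩ := T.exists_split_below hC2 hT hJ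
  have hsub : ∀ {T' : PTree C1 C2 C21 C22}, T'.bitiles ⊆ T₁.bitiles ∪ T₂.bitiles →
      T'.bitiles ⊆ Ps := fun h => h.trans (hunion ▸ (Finset.filter_subset _ _).trans hTP)
  have hsplit : {x | 2 * (t : ℝ) ^ 2 < sqSum φ f (T₁.bitiles ∪ T₂.bitiles) x} ⊆
      {x | (t : ℝ) ^ 2 < sqSum φ f T₁.bitiles x} ∪ {x | (t : ℝ) ^ 2 < sqSum φ f T₂.bitiles x} := by
    intro x hx
    rw [mem_ofPred_eq, sqSum_union φ f hdisj] at hx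
    by_contra! h
    simp only [mem_union, not_or, mem_ofPred_eq, not_lt] at h
    linarith
  rw [← hunion]
  calc (t : ℝ≥0∞) * wMeasure w {x | 2 * (t : ℝ) ^ 2 < sqSum φ f (T₁.bitiles ∪ T₂.bitiles) x}
      ≤ t * wMeasure w {x | (t : ℝ) ^ 2 < sqSum φ f T₁.bitiles x} +
          t * wMeasure w {x | (t : ℝ) ^ 2 < sqSum φ f T₂.bitiles x} := by
        rw [← mul_add]
        exact mul_le_mul_right ((measure_mono hsplit).trans (measure_union_le _ _)) _
    _ ≤ sizeWk w φ f Ps * wSet w T₁.top.toSet + sizeWk w φ f Ps * wSet w T₂.top.toSet :=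
        add_le_add (mul_wMeasure_le_sizeWk_mul hw (hsub Finset.subset_union_left) hT₁ t)
          (mul_wMeasure_le_sizeWk_mul hw (hsub Finset.subset_union_right) hT₂ t)
    _ = 2 * sizeWk w φ f Ps * wSet w T₁.top.toSet := by rw [hJ₂]; ring

/-- On each stopping interval `J` of the square sum at level `c`, the excess over `c` comes from
the bitiles below `J`, which form two overlapping trees with top `J`. -/
theorem good_lambda (hC2 : 1 ≤ C2) (hw : IsWeight w) {T : PTree C1 C2 C21 C22}
    (hTP : T.bitiles ⊆ Ps) (hT : T.overlapping) {c : ℝ} (hc : 0 ≤ c) (t : ℝ≥0) :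
    t * wMeasure w {x | c + 2 * (t : ℝ) ^ 2 < sqSum φ f T.bitiles x} ≤
      2 * sizeWk w φ f Ps * wMeasure w {x | c < sqSum φ f T.bitiles x} := by
  have hlam := isLaminar_bitile_I T.bitiles
  have ha := sqSum_coeff_nonneg φ f T.bitiles
  set 𝒥 := stoppingSets T.bitiles (fun P => P.I.toSet) (fun P => ‖inn f (φ P)‖ ^ 2 / P.I.len) c
  have hunion : ⋃ A ∈ 𝒥, A = {x | c < sqSum φ f T.bitiles x} := hlam.biUnion_stoppingSets ha hc
  have hcover : {x | c + 2 * (t : ℝ) ^ 2 < sqSum φ f T.bitiles x} ⊆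
      ⋃ A ∈ 𝒥, {x | 2 * (t : ℝ) ^ 2 < sqSum φ f (T.bitiles.filter fun P => P.I.toSet ⊆ A) x} := by
    intro x hx
    rw [mem_ofPred_eq] at hx
    have hxc : x ∈ ⋃ A ∈ 𝒥, A := by
      rw [hunion]
      exact (le_add_of_nonneg_right (by positivity)).trans_lt hx
    obtain ⟨A, hA, hxA⟩ := mem_iUnion₂.mp hxc
    have : sqSum φ f T.bitiles x ≤ c + sqSum φ f (T.bitiles.filter fun P => P.I.toSet ⊆ A) x :=
      hlam.indicatorSum_le_of_mem_stoppingSets hA hxA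
    exact mem_biUnion hA (show 2 * (t : ℝ) ^ 2 < _ by linarith)
  calc (t : ℝ≥0∞) * wMeasure w {x | c + 2 * (t : ℝ) ^ 2 < sqSum φ f T.bitiles x}
      ≤ ∑ A ∈ 𝒥, t * wMeasure w
          {x | 2 * (t : ℝ) ^ 2 < sqSum φ f (T.bitiles.filter fun P => P.I.toSet ⊆ A) x} := by
        rw [← Finset.mul_sum]
        exact mul_le_mul_right ((measure_mono hcover).trans (measure_biUnion_finset_le _ _)) _
    _ ≤ ∑ A ∈ 𝒥, 2 * sizeWk w φ f Ps * wMeasure w A := Finset.sum_le_sum fun A hA => by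
        obtain ⟨P, -, rfl⟩ := exists_eq_of_mem_stoppingSets hA
        exact mul_wMeasure_below_le hC2 hw hTP hT P.dyadic_I t
    _ = 2 * sizeWk w φ f Ps * wMeasure w {x | c < sqSum φ f T.bitiles x} := by
        rw [← Finset.mul_sum, ← hunion]
        refine congrArg _ (measure_biUnion_finset (hlam.pairwiseDisjoint_stoppingSets ha c)
          fun A hA => ?_).symm
        obtain ⟨P, -, rfl⟩ := exists_eq_of_mem_stoppingSets hA
        exact measurableSet_Ico

end GoodLambda

section LayerCake

variable {α : Type*}

lemma ofReal_rpow_le_tsum_indicator {g : α → ℝ} {a r : ℝ} (ha : 0 < a) (hr : 0 < r) (x : α) :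
    ENNReal.ofReal (g x) ^ r ≤
      ∑' k : ℕ, {y | a * k < g y}.indicator (fun _ => ENNReal.ofReal (a * (k + 1)) ^ r) x := by
  rcases le_or_gt (g x) 0 with hgx | hgx
  · rw [ENNReal.ofReal_of_nonpos hgx, ENNReal.zero_rpow_of_pos hr]
    exact zero_le
  have hceil : 0 < ⌈g x / a⌉₊ := Nat.ceil_pos.mpr (by positivity)
  set k := ⌈g x / a⌉₊ - 1
  have hk : ((k : ℝ) + 1) = ⌈g x / a⌉₊ := by exact_mod_cast Nat.sub_add_cancel hceil
  have hxk : a * k < g x := by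
    have := Nat.ceil_lt_add_one (div_pos hgx ha).le
    rw [← hk, add_lt_add_iff_right, lt_div_iff₀ ha] at this
    linarith
  have hle : g x ≤ a * (k + 1) := by
    rw [hk, mul_comm, ← div_le_iff₀ ha]
    exact Nat.le_ceil _
  calc ENNReal.ofReal (g x) ^ r ≤ ENNReal.ofReal (a * (k + 1)) ^ r :=
        ENNReal.rpow_le_rpow (ENNReal.ofReal_le_ofReal hle) hr.le
    _ = {y | a * k < g y}.indicator (fun _ => ENNReal.ofReal (a * (k + 1)) ^ r) x :=
        (indicator_of_mem hxk fun _ => ENNReal.ofReal (a * (k + 1)) ^ r).symm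
    _ ≤ _ := ENNReal.le_tsum k

lemma ofReal_mul_succ_rpow_mul_le {a r : ℝ} (ha : 0 < a) (hr : 0 ≤ r) {n : ℕ} (hrn : r ≤ n)
    (k : ℕ) :
    ENNReal.ofReal (a * (k + 1)) ^ r * (2 ^ (n + 1))⁻¹ ^ k ≤ ENNReal.ofReal a ^ r * 2⁻¹ ^ k := by
  have hk : ENNReal.ofReal ((k : ℝ) + 1) ^ r ≤ (2 ^ k) ^ n := by
    rw [← Nat.cast_succ, ENNReal.ofReal_natCast]
    calc ((k + 1 : ℕ) : ℝ≥0∞) ^ r ≤ ((k + 1 : ℕ) : ℝ≥0∞) ^ (n : ℝ) :=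
          ENNReal.rpow_le_rpow_of_exponent_le (by exact_mod_cast Nat.succ_pos k) hrn
      _ ≤ (2 ^ k) ^ n := by
          rw [ENNReal.rpow_natCast]
          exact pow_le_pow_left₀ zero_le (by exact_mod_cast Nat.lt_two_pow_self) n
  have hpow : ((2 : ℝ≥0∞) ^ k) ^ n * (2 ^ (n + 1))⁻¹ ^ k = 2⁻¹ ^ k := by
    rw [show ((2 : ℝ≥0∞) ^ (n + 1))⁻¹ = 2⁻¹ ^ (n + 1) by rw [ENNReal.inv_pow],
      ← pow_mul, ← pow_mul, add_one_mul, pow_add, ← mul_assoc, mul_comm k n, ← mul_pow,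
      ENNReal.mul_inv_cancel two_ne_zero ENNReal.ofNat_ne_top, one_pow, one_mul]
  rw [ENNReal.ofReal_mul ha.le, ENNReal.mul_rpow_of_nonneg _ _ hr, mul_assoc, ← hpow]
  gcongr

variable [MeasurableSpace α] {μ : Measure α}

/-- Geometric decay of the superlevel sets `{a k < g}` at rate `2^{-(n+1)}` beats the growth
`(k+1)^r ≤ 2^{kn}` of the levels. -/
theorem lintegral_rpow_le_of_superlevel_decay {g : α → ℝ} (hg : Measurable g) {a r : ℝ}
    (ha : 0 < a) (hr : 0 < r) {n : ℕ} (hrn : r ≤ n)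
    (hdecay : ∀ k : ℕ, μ {x | a * (k + 1) < g x} ≤ (2 ^ (n + 1))⁻¹ * μ {x | a * k < g x}) :
    ∫⁻ x, ENNReal.ofReal (g x) ^ r ∂μ ≤ 2 * ENNReal.ofReal a ^ r * μ {x | 0 < g x} := by
  set A : ℕ → Set α := fun k => {x | a * k < g x} with hA_def
  have hA : ∀ k, MeasurableSet (A k) := fun k => measurableSet_lt measurable_const hg
  have hiter : ∀ k : ℕ, μ (A k) ≤ (2 ^ (n + 1))⁻¹ ^ k * μ (A 0) := by
    intro k
    induction k with
    | zero => simp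
    | succ k ih =>
      calc μ (A (k + 1)) ≤ (2 ^ (n + 1))⁻¹ * μ (A k) := by
            simpa only [hA_def, Nat.cast_succ] using hdecay k
        _ ≤ (2 ^ (n + 1))⁻¹ * ((2 ^ (n + 1))⁻¹ ^ k * μ (A 0)) := mul_le_mul_right ih _
        _ = (2 ^ (n + 1))⁻¹ ^ (k + 1) * μ (A 0) := by ring
  calc ∫⁻ x, ENNReal.ofReal (g x) ^ r ∂μ
      ≤ ∫⁻ x, ∑' k : ℕ, (A k).indicator (fun _ => ENNReal.ofReal (a * (k + 1)) ^ r) x ∂μ :=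
        lintegral_mono (ofReal_rpow_le_tsum_indicator ha hr)
    _ = ∑' k : ℕ, ENNReal.ofReal (a * (k + 1)) ^ r * μ (A k) := by
        rw [lintegral_tsum fun k => (measurable_const.indicator (hA k)).aemeasurable]
        exact tsum_congr fun k => lintegral_indicator_const (hA k) _
    _ ≤ ∑' k : ℕ, ENNReal.ofReal a ^ r * 2⁻¹ ^ k * μ (A 0) := ENNReal.tsum_le_tsum fun k =>
        calc ENNReal.ofReal (a * (k + 1)) ^ r * μ (A k)
            ≤ ENNReal.ofReal (a * (k + 1)) ^ r * ((2 ^ (n + 1))⁻¹ ^ k * μ (A 0)) := by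
              gcongr; exact hiter k
          _ ≤ ENNReal.ofReal a ^ r * 2⁻¹ ^ k * μ (A 0) := by
              rw [← mul_assoc]
              exact mul_le_mul' (ofReal_mul_succ_rpow_mul_le ha hr.le hrn k) le_rfl
    _ = 2 * ENNReal.ofReal a ^ r * μ {x | 0 < g x} := by
        rw [ENNReal.tsum_mul_right, ENNReal.tsum_mul_left, ENNReal.tsum_geometric,
          ENNReal.one_sub_inv_two, inv_inv, show A 0 = {x | 0 < g x} by simp [hA_def]]
        ring

end LayerCake

section Normalization

variable {α : Type*} [MeasurableSpace α] {μ : Measure α} {W : ℝ≥0∞} {p : ℝ}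

lemma rpow_neg_one_div_mul_rpow_le (hp : 0 < p) (hW0 : W ≠ 0) (hWt : W ≠ ⊤) {X K : ℝ≥0∞}
    (h : X ≤ K ^ p * W) : W ^ (-(1 / p)) * X ^ (1 / p) ≤ K :=
  calc W ^ (-(1 / p)) * X ^ (1 / p) ≤ W ^ (-(1 / p)) * (K ^ p * W) ^ (1 / p) := by gcongr
    _ = K * (W ^ (-(1 / p)) * W ^ (1 / p)) := by
        rw [ENNReal.mul_rpow_of_nonneg _ _ (by positivity), ← ENNReal.rpow_mul,
          mul_one_div_cancel hp.ne', ENNReal.rpow_one]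
        ring
    _ = K := by rw [← ENNReal.rpow_add _ _ hW0 hWt, neg_add_cancel, ENNReal.rpow_zero, mul_one]

/-- Chebyshev's inequality for `t^p Y`, interpolated with `Y ≤ W` through
`t Y = (t^p Y)^{1/p} Y^{1-1/p}`. -/
lemma inv_mul_mul_meas_lt_le {F : α → ℝ} (hF : Measurable F) (hp : 1 ≤ p) (hW0 : W ≠ 0)
    (hWt : W ≠ ⊤) {t : ℝ≥0} (hsupp : μ {x | (t : ℝ) < F x} ≤ W) :
    W⁻¹ * (t * μ {x | (t : ℝ) < F x}) ≤
      W ^ (-(1 / p)) * (∫⁻ x, ENNReal.ofReal (F x) ^ p ∂μ) ^ (1 / p) := by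
  set Y := μ {x | (t : ℝ) < F x}
  have hp0 : 0 < p := by linarith
  have hmarkov : (t : ℝ≥0∞) ^ p * Y ≤ ∫⁻ x, ENNReal.ofReal (F x) ^ p ∂μ := by
    refine (mul_le_mul_right (measure_mono fun x (hx : (t : ℝ) < F x) => ?_) _).trans
      (mul_meas_ge_le_lintegral₀ (hF.ennreal_ofReal.pow_const p).aemeasurable _)
    rw [mem_ofPred_eq, ← ENNReal.ofReal_coe_nnreal]
    exact ENNReal.rpow_le_rpow (ENNReal.ofReal_le_ofReal hx.le) hp0.le
  rcases eq_or_ne Y 0 with hY0 | hY0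
  · rw [hY0, mul_zero, mul_zero]
    exact zero_le
  have hYt : Y ≠ ⊤ := ne_top_of_le_ne_top hWt hsupp
  have hsplit : (t : ℝ≥0∞) * Y = ((t : ℝ≥0∞) ^ p * Y) ^ (1 / p) * Y ^ (1 - 1 / p) := by
    rw [ENNReal.mul_rpow_of_nonneg _ _ (by positivity), ← ENNReal.rpow_mul,
      mul_one_div_cancel hp0.ne', ENNReal.rpow_one, mul_assoc, ← ENNReal.rpow_add _ _ hY0 hYt,
      add_sub_cancel, ENNReal.rpow_one]
  have hexp : 0 ≤ 1 - 1 / p := by rw [sub_nonneg, div_le_one hp0]; exact hp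
  calc W⁻¹ * ((t : ℝ≥0∞) * Y)
      ≤ W⁻¹ * ((∫⁻ x, ENNReal.ofReal (F x) ^ p ∂μ) ^ (1 / p) * W ^ (1 - 1 / p)) := by
        rw [hsplit]; gcongr
    _ = W ^ (-(1 / p)) * (∫⁻ x, ENNReal.ofReal (F x) ^ p ∂μ) ^ (1 / p) := by
        rw [← ENNReal.rpow_neg_one, mul_comm ((∫⁻ x, _ ∂μ) ^ (1 / p)), ← mul_assoc,
          ← ENNReal.rpow_add _ _ hW0 hWt]
        ring_nf

end Normalization

section Size

variable {C1 C2 C21 C22 : ℝ} {w : ℝ → ℝ} {φ : Bitile C1 C2 C21 C22 → ℝ → ℂ} {f : ℝ → ℂ}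
  {Ps : Finset (Bitile C1 C2 C21 C22)} {p : ℝ}

lemma wMeasure_sqSum_pos_le (T : PTree C1 C2 C21 C22) :
    wMeasure w {x | 0 < sqSum φ f T.bitiles x} ≤ wSet w T.top.toSet :=
  measure_mono (T.setOf_sqSum_pos_subset φ f)

lemma lintegral_SQfn_rpow_eq (Q : Finset (Bitile C1 C2 C21 C22)) :
    ∫⁻ x, ENNReal.ofReal (SQfn φ f Q x) ^ p ∂wMeasure w =
      ∫⁻ x, ENNReal.ofReal (sqSum φ f Q x) ^ (p / 2) ∂wMeasure w := by
  refine lintegral_congr fun x => ?_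
  rw [SQfn_eq_sqrt, Real.sqrt_eq_rpow,
    ← ENNReal.ofReal_rpow_of_nonneg (sqSum_nonneg φ f Q x) (by norm_num), ← ENNReal.rpow_mul]
  ring_nf

lemma tree_sizeWk_le_sizeLp (hw : IsWeight w) (hp : 1 ≤ p) (T : PTree C1 C2 C21 C22) :
    (wSet w T.top.toSet)⁻¹ *
        ⨆ t : ℝ≥0, (t : ℝ≥0∞) * wMeasure w {x | (t : ℝ) < SQfn φ f T.bitiles x} ≤
      (wSet w T.top.toSet) ^ (-(1 / p)) *
        (∫⁻ x, ENNReal.ofReal (SQfn φ f T.bitiles x) ^ p ∂wMeasure w) ^ (1 / p) := by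
  rw [ENNReal.mul_iSup]
  refine iSup_le fun t => inv_mul_mul_meas_lt_le (measurable_SQfn φ f _) hp
    (hw.wSet_dyadic_ne_zero T.dytop) (hw.wSet_ne_top _) ?_
  rw [setOf_lt_SQfn φ f _ t.coe_nonneg]
  refine le_trans (measure_mono fun x hx => ?_) (wMeasure_sqSum_pos_le (φ := φ) (f := f) T)
  exact (sq_nonneg (t : ℝ)).trans_lt hx

lemma wMeasure_lt_add_le_of_sizeWk_lt (hC2 : 1 ≤ C2) (hw : IsWeight w) {T : PTree C1 C2 C21 C22}
    (hTP : T.bitiles ⊆ Ps) (hT : T.overlapping) {c : ℝ} (hc : 0 ≤ c) {s : ℝ≥0}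
    (hs : sizeWk w φ f Ps < s) (n : ℕ) :
    wMeasure w {x | c + 2 * ((2 ^ (n + 2) * s : ℝ≥0) : ℝ) ^ 2 < sqSum φ f T.bitiles x} ≤
      (2 ^ (n + 1))⁻¹ * wMeasure w {x | c < sqSum φ f T.bitiles x} := by
  have h2s : (2 * s : ℝ≥0∞) ≠ 0 := mul_ne_zero two_ne_zero (hs.trans_le' zero_le).ne'
  rw [← ENNReal.div_eq_inv_mul, ENNReal.le_div_iff_mul_le (.inl (by positivity)) (.inl (by simp)),
    ← ENNReal.mul_le_mul_iff_right h2s (by finiteness)]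
  calc 2 * (s : ℝ≥0∞) * (wMeasure w _ * 2 ^ (n + 1))
      = ((2 ^ (n + 2) * s : ℝ≥0) : ℝ≥0∞) * wMeasure w _ := by push_cast; ring
    _ ≤ 2 * sizeWk w φ f Ps * wMeasure w _ := good_lambda hC2 hw hTP hT hc _
    _ ≤ 2 * s * wMeasure w _ := by gcongr

/-- With `t = 2^{n+2} s`, the superlevel sets `{2t²k < S_T²}` decay at rate `2^{-(n+1)}`. -/
lemma tree_sizeLp_le (hC2 : 1 ≤ C2) (hw : IsWeight w) (hp : 1 ≤ p) {n : ℕ} (hpn : p / 2 ≤ n)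
    {T : PTree C1 C2 C21 C22} (hTP : T.bitiles ⊆ Ps) (hT : T.overlapping) {s : ℝ≥0}
    (hs : sizeWk w φ f Ps < s) :
    (wSet w T.top.toSet) ^ (-(1 / p)) *
        (∫⁻ x, ENNReal.ofReal (SQfn φ f T.bitiles x) ^ p ∂wMeasure w) ^ (1 / p) ≤
      2 ^ (n + 4) * s := by
  have hp0 : 0 < p := by linarith
  set t : ℝ≥0 := 2 ^ (n + 2) * s
  have ht : (0 : ℝ) < t :=
    NNReal.coe_pos.mpr (mul_pos (by positivity) (ENNReal.coe_pos.mp (hs.trans_le' zero_le)))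
  have hint := lintegral_rpow_le_of_superlevel_decay (measurable_sqSum φ f T.bitiles)
    (a := 2 * (t : ℝ) ^ 2) (by positivity) (by positivity) hpn fun k => by
      rw [mul_add_one]
      exact wMeasure_lt_add_le_of_sizeWk_lt hC2 hw hTP hT (by positivity) hs n
  refine rpow_neg_one_div_mul_rpow_le hp0 (hw.wSet_dyadic_ne_zero T.dytop) (hw.wSet_ne_top _) ?_
  rw [lintegral_SQfn_rpow_eq]
  have hlevel : ENNReal.ofReal (2 * (t : ℝ) ^ 2) ≤ (2 * (t : ℝ≥0∞)) ^ 2 := by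
    rw [← ENNReal.ofReal_coe_nnreal, ← ENNReal.ofReal_ofNat 2, ← ENNReal.ofReal_mul (by norm_num),
      ← ENNReal.ofReal_pow (by positivity)]
    exact ENNReal.ofReal_le_ofReal (by nlinarith)
  have htwo : (2 : ℝ≥0∞) ≤ 2 ^ p := by
    simpa using ENNReal.rpow_le_rpow_of_exponent_le (x := 2) (by norm_num) hp
  calc ∫⁻ x, ENNReal.ofReal (sqSum φ f T.bitiles x) ^ (p / 2) ∂wMeasure w
      ≤ 2 * ENNReal.ofReal (2 * (t : ℝ) ^ 2) ^ (p / 2) *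
          wMeasure w {x | 0 < sqSum φ f T.bitiles x} := hint
    _ ≤ 2 ^ p * ((2 * (t : ℝ≥0∞)) ^ 2) ^ (p / 2) * wSet w T.top.toSet := by
        gcongr
        exact wMeasure_sqSum_pos_le T
    _ = (2 ^ (n + 4) * s) ^ p * wSet w T.top.toSet := by
        rw [← ENNReal.rpow_natCast, ← ENNReal.rpow_mul, Nat.cast_ofNat,
          mul_div_cancel₀ _ two_ne_zero, ← ENNReal.mul_rpow_of_nonneg _ _ hp0.le]
        simp only [t]
        push_cast
        ring_nf

lemma sizeWk_le_sizeLp (hw : IsWeight w) (hp : 1 ≤ p) : sizeWk w φ f Ps ≤ sizeLp w φ f p Ps :=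
  iSup_mono fun T => iSup_mono fun _ => iSup_mono fun _ => tree_sizeWk_le_sizeLp hw hp T

lemma sizeLp_le_mul_sizeWk (hC2 : 1 ≤ C2) (hw : IsWeight w) (hp : 1 ≤ p) {n : ℕ}
    (hpn : p / 2 ≤ n) : sizeLp w φ f p Ps ≤ 2 ^ (n + 4) * sizeWk w φ f Ps := by
  refine ENNReal.le_mul_of_forall_lt (.inl (by positivity)) (.inl (by finiteness))
    fun K hK s hs => ?_
  rcases eq_or_ne s ⊤ with rfl | hs_top
  · rw [ENNReal.mul_top (hK.trans_le' zero_le).ne']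
    exact le_top
  lift s to ℝ≥0 using hs_top
  exact le_trans (iSup_le fun T => iSup_le fun hTP => iSup_le fun hT =>
    tree_sizeLp_le hC2 hw hp hpn hTP hT hs) (mul_le_mul_left hK.le _)

end Size

theorem size_john_nirenberg_general
    (C1 C2 C21 C22 C3 : ℝ) (hadm : Admissible C1 C2 C21 C22 C3) (Cp : ℕ → ℕ → ℝ)
    (q : ℝ) (w : ℝ → ℝ) (hw : IsAp q w) (p : ℝ) (hp : 1 < p) :
    ∃ K0min : ℝ, ∀ K0 : ℝ, K0min ≤ K0 →
    ∃ C : ℝ, 0 < C ∧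
      ∀ Ps : Finset (Bitile C1 C2 C21 C22), SepConds K0 Ps →
      ∀ φ : Bitile C1 C2 C21 C22 → ℝ → ℂ,
        (∀ P ∈ Ps, IsWavePacket C3 Cp P.t1 (φ P)) →
      ∀ f : ℝ → ℂ, Measurable f →
        sizeLp w φ f p Ps ≤ ENNReal.ofReal C * sizeWk w φ f Ps ∧
        sizeWk w φ f Ps ≤ ENNReal.ofReal C * sizeLp w φ f p Ps := by
  have hC : ENNReal.ofReal (2 ^ (⌈p⌉₊ + 4)) = 2 ^ (⌈p⌉₊ + 4) := by
    rw [ENNReal.ofReal_pow zero_le_two, ENNReal.ofReal_ofNat]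
  refine ⟨0, fun _ _ => ⟨2 ^ (⌈p⌉₊ + 4), by positivity, fun Ps _ φ _ f _ => ?_⟩⟩
  have hpn : p / 2 ≤ ⌈p⌉₊ := (half_le_self (by linarith)).trans (Nat.le_ceil p)
  rw [hC]
  exact ⟨sizeLp_le_mul_sizeWk hadm.1 hw.1 hp.le hpn, (sizeWk_le_sizeLp hw.1 hp.le).trans
    (le_mul_of_one_le_left zero_le (one_le_pow₀ one_le_two))⟩

/-- **Lemma 3.2 (John–Nirenberg characterization of size).** The `L^p`-normalized and the
weak-`L^1`-normalized sizes over `2`-overlapping trees are comparable. -/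
theorem size_john_nirenberg
    (C1 C2 C21 C22 C3 : ℝ) (hadm : Admissible C1 C2 C21 C22 C3) (Cp : ℕ → ℕ → ℝ)
    (q : ℝ) (hq : 1 < q) (w : ℝ → ℝ) (hw : IsAp q w) (p : ℝ) (hp : 1 < p) :
    ∃ K0min : ℝ, ∀ K0 : ℝ, K0min ≤ K0 →
    ∃ C : ℝ, 0 < C ∧
      ∀ Ps : Finset (Bitile C1 C2 C21 C22), SepConds K0 Ps →
      ∀ φ : Bitile C1 C2 C21 C22 → ℝ → ℂ,
        (∀ P ∈ Ps, IsWavePacket C3 Cp P.t1 (φ P)) →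
      ∀ f : ℝ → ℂ, Measurable f →
        sizeLp w φ f p Ps ≤ ENNReal.ofReal C * sizeWk w φ f Ps ∧
        sizeWk w φ f Ps ≤ ENNReal.ofReal C * sizeLp w φ f p Ps :=
  size_john_nirenberg_general C1 C2 C21 C22 C3 hadm Cp q w hw p hp
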